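/- arXiv:1807.11362 — 11 statements merged into one kernel-verified Lean document; each statement's English description precedes it below -/
import Mathlib

section
/- If m·n ≡ 1 (mod q−1), then D(q; m, 1) ≅ D(q; 1, n), and D(q; m, n) ≅ D(q; 1, n²) ≅ D(q; m², 1). -/
/-! Since `m n ≡ 1 (mod q - 1)` and `m n ≥ 1`, every `x ∈ F` satisfies `x ^ (m n) = x`. Hence
`x ↦ x ^ m` is a permutation of `F` with inverse `x ↦ x ^ n`, and `(x, y) ↦ (x ^ m, y)` is an
isomorphism in the first two cases because `(x ^ m) ^ n = x` and `(x ^ m) ^ (n ^ 2) = x ^ n`;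
symmetrically `(x, y) ↦ (x ^ n, y)` works in the third, as `(x ^ n) ^ (m ^ 2) = x ^ m`. -/

/-- The arc relation of the monomial digraph `D(q; m, n)`. -/
def monArc {F : Type*} [Field F] (m n : ℕ) (u v : F × F) : Prop :=
  u.2 + v.2 = u.1 ^ m * v.1 ^ n

/-- Monomial digraphs `D(q; m₁,n₁)` and `D(q; m₂,n₂)` are isomorphic. -/
def monIso (F : Type*) [Field F] (m₁ n₁ m₂ n₂ : ℕ) : Prop :=
  ∃ φ : (F × F) ≃ (F × F),
    ∀ u v : F × F, monArc m₁ n₁ u v ↔ monArc m₂ n₂ (φ u) (φ v)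

theorem FiniteField.pow_eq_self_of_modEq_one {F : Type*} [Field F] [Fintype F] {k : ℕ}
    (hk₀ : k ≠ 0) (hk : k ≡ 1 [MOD Fintype.card F - 1]) (x : F) : x ^ k = x := by
  obtain ⟨j, hj⟩ := (Nat.modEq_iff_dvd' (Nat.one_le_iff_ne_zero.mpr hk₀)).mp hk.symm
  rcases eq_or_ne x 0 with rfl | hx
  · exact zero_pow hk₀
  · rw [show k = (Fintype.card F - 1) * j + 1 by omega, pow_succ, pow_mul,
      FiniteField.pow_card_sub_one_eq_one x hx, one_pow, one_mul]

def powEquivOfPowMulEqSelf {M : Type*} [CommMonoid M] (m n : ℕ)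
    (h : ∀ x : M, x ^ (m * n) = x) : M ≃ M where
  toFun x := x ^ m
  invFun x := x ^ n
  left_inv x := by simp only [← pow_mul, h]
  right_inv x := by simp only [← pow_mul, mul_comm n m, h]

theorem monIso_of_equiv_fst {F : Type*} [Field F] {m₁ n₁ m₂ n₂ : ℕ} (e : F ≃ F)
    (hm : ∀ x, e x ^ m₂ = x ^ m₁) (hn : ∀ x, e x ^ n₂ = x ^ n₁) : monIso F m₁ n₁ m₂ n₂ :=
  ⟨e.prodCongr (Equiv.refl F), fun u v => by
    simp only [monArc, Equiv.prodCongr_apply, Prod.map_fst, Prod.map_snd, Equiv.refl_apply,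
      hm, hn]⟩

/-- If `m n ≡ 1 (mod q−1)`, then `D(q; m,1) ≅ D(q; 1,n)`, and
`D(q; m,n) ≅ D(q; 1,n²) ≅ D(q; m²,1)`. -/
theorem stmt_4 {F : Type*} [Field F] [Fintype F] (q : ℕ) (hq : Fintype.card F = q)
    (m n : ℕ) (hm : 1 ≤ m ∧ m ≤ q - 1) (hn : 1 ≤ n ∧ n ≤ q - 1)
    (h : m * n ≡ 1 [MOD q - 1]) :
    monIso F m 1 1 n ∧ monIso F m n 1 (n ^ 2) ∧ monIso F m n (m ^ 2) 1 := by
  subst hq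
  have hmn : ∀ x : F, x ^ (m * n) = x :=
    FiniteField.pow_eq_self_of_modEq_one (Nat.mul_ne_zero (by omega) (by omega)) h
  have hnm : ∀ x : F, x ^ (n * m) = x := fun x => mul_comm m n ▸ hmn x
  have hmn₂ : ∀ x : F, x ^ (m * n ^ 2) = x ^ n := fun x => by rw [sq, ← mul_assoc, pow_mul, hmn]
  have hnm₂ : ∀ x : F, x ^ (n * m ^ 2) = x ^ m := fun x => by rw [sq, ← mul_assoc, pow_mul, hnm]
  refine ⟨monIso_of_equiv_fst (powEquivOfPowMulEqSelf m n hmn) ?_ ?_,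
    monIso_of_equiv_fst (powEquivOfPowMulEqSelf m n hmn) ?_ ?_,
    monIso_of_equiv_fst (powEquivOfPowMulEqSelf n m hnm) ?_ ?_⟩ <;>
  intro x <;> simp only [powEquivOfPowMulEqSelf, Equiv.coe_fn_mk, pow_one, ← pow_mul, hmn, hmn₂,
    hnm₂]
end

section
/- If m + n ≡ 0 (mod q−1), then D(q; m, n) is isomorphic to D(q; n, m). -/
/-! Inverting the first coordinate is the isomorphism: since `x ^ (m + n) = 1` for every
`x ≠ 0`, we have `x ^ m = (x⁻¹) ^ n` on all of `F_q`, which turns the arc equation of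
`D(q; m, n)` into that of `D(q; n, m)`. -/

theorem FiniteField.pow_eq_inv_pow_of_card_sub_one_dvd {F : Type*} [Field F] [Fintype F]
    {a b : ℕ} (ha : a ≠ 0) (hb : b ≠ 0) (hab : Fintype.card F - 1 ∣ a + b) (x : F) :
    x ^ a = x⁻¹ ^ b := by
  rcases eq_or_ne x 0 with rfl | hx
  · rw [inv_zero, zero_pow ha, zero_pow hb]
  · obtain ⟨k, hk⟩ := hab
    have hpow : x ^ (a + b) = 1 := by
      rw [hk, pow_mul, FiniteField.pow_card_sub_one_eq_one x hx, one_pow]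
    rw [inv_pow]
    exact eq_inv_of_mul_eq_one_left (by rw [← pow_add, hpow])

theorem monArc_iff_monArc_inv_fst {F : Type*} [Field F] {m n : ℕ}
    (hpow : ∀ x : F, x ^ m = x⁻¹ ^ n) (hpow' : ∀ x : F, x ^ n = x⁻¹ ^ m) (u v : F × F) :
    monArc m n u v ↔ monArc n m (u.1⁻¹, u.2) (v.1⁻¹, v.2) := by
  rw [monArc, hpow u.1, hpow' v.1]
  rfl

/-- If `m + n ≡ 0 (mod q−1)`, then `D(q; m, n) ≅ D(q; n, m)`. -/
theorem stmt_5 {F : Type*} [Field F] [Fintype F] (q : ℕ) (hq : Fintype.card F = q)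
    (m n : ℕ) (hm : 1 ≤ m ∧ m ≤ q - 1) (hn : 1 ≤ n ∧ n ≤ q - 1)
    (h : m + n ≡ 0 [MOD q - 1]) :
    ∃ φ : (F × F) ≃ (F × F),
      ∀ u v : F × F, monArc m n u v ↔ monArc n m (φ u) (φ v) := by
  have hdvd : Fintype.card F - 1 ∣ m + n := hq ▸ Nat.modEq_zero_iff_dvd.mp h
  have hm0 : m ≠ 0 := by omega
  have hn0 : n ≠ 0 := by omega
  refine ⟨(Equiv.inv F).prodCongr (Equiv.refl F), monArc_iff_monArc_inv_fst ?_ ?_⟩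
  · exact FiniteField.pow_eq_inv_pow_of_card_sub_one_dvd hm0 hn0 hdvd
  · exact FiniteField.pow_eq_inv_pow_of_card_sub_one_dvd hn0 hm0 (add_comm m n ▸ hdvd)
end

section
/- If D(q; m₁, n₁) ≅ D(q; m₂, n₂) and m₁ = n₁, then m₂ = n₂. More precisely: if every arc of D(q; m₂, n₂) has its opposite arc also present, then m₂ = n₂ (as residues modulo q−1). -/
/-- If every arc of `D(q; m₂, n₂)` has its opposite arc also present, then
`m₂ = n₂` as residues modulo `q − 1`. -/
theorem stmt_6 {F : Type*} [Field F] [Fintype F] (q : ℕ) (hq : Fintype.card F = q)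
    (hq2 : 2 < q) (m₂ n₂ : ℕ) (hm : 1 ≤ m₂ ∧ m₂ ≤ q - 1) (hn : 1 ≤ n₂ ∧ n₂ ≤ q - 1)
    (hsymm : ∀ u v : F × F, monArc m₂ n₂ u v → monArc m₂ n₂ v u) :
    m₂ ≡ n₂ [MOD q - 1] := by
  obtain ⟨g, hg⟩ := IsCyclic.exists_generator (α := Fˣ)
  have hord : orderOf g = q - 1 := by
    rw [orderOf_eq_card_of_forall_mem_zpowers hg, Nat.card_units, Nat.card_eq_fintype_card, hq]
  -- arc from ((g:F), 0) to (1, (g:F)^m₂)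
  have harc : monArc m₂ n₂ ((g : F), 0) (1, (g : F) ^ m₂) := by
    simp [monArc]
  have hsym := hsymm _ _ harc
  simp only [monArc, one_pow, one_mul] at hsym
  -- hsym : (g:F)^m₂ + 0 = (g:F)^n₂
  have hF : (g : F) ^ m₂ = (g : F) ^ n₂ := by linear_combination hsym
  have hU : g ^ m₂ = g ^ n₂ := Units.ext (by push_cast; exact hF)
  have := (pow_eq_pow_iff_modEq).mp hU
  rwa [hord] at this
end

section
/- If gcd(m, q−1) = gcd(n, q−1), then D(q; m, m) is isomorphic to D(q; n, n). -/
lemma exists_k (d m n : ℕ) (hd : 1 ≤ d) (hmn : Nat.gcd m d = Nat.gcd n d) :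
    ∃ k, 1 ≤ k ∧ Nat.Coprime k d ∧ n * k ≡ m [MOD d] := by
  rcases eq_or_lt_of_le hd with hd1 | hd2
  · exact ⟨1, le_refl 1, Nat.coprime_one_left _, by
      simp [Nat.ModEq, ← hd1, Nat.mod_one]⟩
  set g := Nat.gcd m d with hg
  have hgd : g ∣ d := Nat.gcd_dvd_right m d
  have hgm : g ∣ m := Nat.gcd_dvd_left m d
  have hgn : g ∣ n := hmn ▸ Nat.gcd_dvd_left n d
  have hgpos : 0 < g := Nat.gcd_pos_of_pos_right m hd
  set d' := d / g with hd'
  set m' := m / g with hm'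
  set n' := n / g with hn'
  have hdd' : d' ∣ d := Nat.div_dvd_of_dvd hgd
  have hd'pos : 0 < d' := Nat.div_pos (Nat.le_of_dvd hd hgd) hgpos
  have hcm : Nat.Coprime m' d' := Nat.coprime_div_gcd_div_gcd (Nat.gcd_pos_of_pos_right m hd)
  have hcn : Nat.Coprime n' d' := by
    have := Nat.coprime_div_gcd_div_gcd (m := n) (n := d) (Nat.gcd_pos_of_pos_right n hd)
    rwa [← hmn] at this
  haveI : NeZero d := ⟨by omega⟩
  haveI : NeZero d' := ⟨by omega⟩
  set a : (ZMod d')ˣ := ZMod.unitOfCoprime n' hcn with ha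
  set b : (ZMod d')ˣ := ZMod.unitOfCoprime m' hcm with hb
  obtain ⟨u, hu⟩ := ZMod.unitsMap_surjective hdd' (a⁻¹ * b)
  set k := (u : ZMod d).val with hk
  have hcop : Nat.Coprime k d := ZMod.val_coe_unit_coprime u
  have hk1 : 1 ≤ k := by
    rcases Nat.eq_zero_or_pos k with h0 | h1
    · exfalso; rw [h0] at hcop
      simp [Nat.Coprime] at hcop; omega
    · exact h1
  have hcast : ((k : ℕ) : ZMod d') = ((a⁻¹ * b : (ZMod d')ˣ) : ZMod d') := by
    rw [hk, ZMod.natCast_val, ← hu]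
    rfl
  have hzm : ((n' * k : ℕ) : ZMod d') = ((m' : ℕ) : ZMod d') := by
    push_cast
    rw [hcast]
    have : ((n' : ℕ) : ZMod d') = (a : ZMod d') := (ZMod.coe_unitOfCoprime n' hcn).symm
    rw [this, ← Units.val_mul, mul_inv_cancel_left, ZMod.coe_unitOfCoprime]
  have hmod' : n' * k ≡ m' [MOD d'] := (ZMod.natCast_eq_natCast_iff _ _ _).mp hzm
  have hmod := Nat.ModEq.mul_left' (c := g) hmod'
  rw [← mul_assoc, Nat.mul_div_cancel' hgn, Nat.mul_div_cancel' hgm,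
    Nat.mul_div_cancel' hgd] at hmod
  exact ⟨k, hk1, hcop, hmod⟩

lemma pow_congr_of_modEq {F : Type*} [Field F] [Fintype F] {a b : ℕ}
    (ha : 1 ≤ a) (hb : 1 ≤ b) (hab : a ≡ b [MOD Fintype.card F - 1]) (x : F) :
    x ^ a = x ^ b := by
  rcases eq_or_ne x 0 with rfl | hx
  · rw [zero_pow (by omega), zero_pow (by omega)]
  · have h1 : x ^ (Fintype.card F - 1) = 1 := FiniteField.pow_card_sub_one_eq_one x hx
    have key : ∀ c : ℕ, x ^ c = x ^ (c % (Fintype.card F - 1)) := by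
      intro c
      conv_lhs => rw [← Nat.div_add_mod c (Fintype.card F - 1)]
      rw [pow_add, pow_mul, h1, one_pow, one_mul]
    rw [key a, key b, hab]

/-- If `gcd(m, q−1) = gcd(n, q−1)`, then `D(q; m, m) ≅ D(q; n, n)`. -/
theorem stmt_7 {F : Type*} [Field F] [Fintype F] (q : ℕ) (hq : Fintype.card F = q)
    (m n : ℕ) (hm : 1 ≤ m ∧ m ≤ q - 1) (hn : 1 ≤ n ∧ n ≤ q - 1)
    (h : Nat.gcd m (q - 1) = Nat.gcd n (q - 1)) :
    ∃ φ : (F × F) ≃ (F × F),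
      ∀ u v : F × F, monArc m m u v ↔ monArc n n (φ u) (φ v) := by
  subst hq
  set d := Fintype.card F - 1 with hd
  have hdpos : 1 ≤ d := by
    have := Fintype.one_lt_card (α := F)
    omega
  obtain ⟨k, hk1, hkc, hkm⟩ := exists_k d m n hdpos h
  obtain ⟨k', hk'1, hk'c, hk'm⟩ := exists_k d 1 k hdpos (by
    rw [Nat.gcd_one_left d]; exact (Nat.coprime_iff_gcd_eq_one.mp hkc).symm)
  have hinv : ∀ x : F, (x ^ k) ^ k' = x := by
    intro x
    rw [← pow_mul]
    have := pow_congr_of_modEq (a := k * k') (b := 1)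
      (Nat.mul_pos hk1 hk'1) le_rfl hk'm x
    rw [this, pow_one]
  have hinv' : ∀ x : F, (x ^ k') ^ k = x := by
    intro x
    rw [← pow_mul, mul_comm k' k, pow_mul]
    exact hinv x
  refine ⟨⟨fun u => (u.1 ^ k, u.2), fun u => (u.1 ^ k', u.2),
    fun u => by simp [hinv], fun u => by simp [hinv']⟩, ?_⟩
  intro u v
  have key : ∀ x : F, (x ^ k) ^ n = x ^ m := by
    intro x
    rw [← pow_mul]
    exact pow_congr_of_modEq (Nat.mul_pos hk1 hn.1) hm.1 (by rw [mul_comm]; exact hkm) x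
  simp only [monArc, Equiv.coe_fn_mk, key]
end

section
/- Let q be an odd prime power and let φ : D(q; m₁, n₁) → D(q; m₂, n₂) be a digraph isomorphism written as φ(x, y) = (f(x, y), g(x, y)). Then f and g are permutation polynomials in two variables on F_q, i.e., for every α ∈ F_q the equation f(x, y) = α has exactly q solutions (x, y) ∈ F_q², and similarly for g. -/
private lemma monArc_zero_fst {F : Type*} [Field F] {m n : ℕ} (hm : m ≠ 0)
    (β : F) (v : F × F) : monArc m n (0, -β) v ↔ v.2 = β := by
  simp only [monArc, zero_pow hm, zero_mul, neg_add_eq_zero, eq_comm]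

/-- If `φ = (f, g)` is an isomorphism of monomial digraphs over `F_q` with `q`
odd, then `f` and `g` are permutation polynomials in two variables: each fiber
has exactly `q` elements. -/
theorem stmt_10 {F : Type*} [Field F] [Fintype F] (q : ℕ) (hq : Fintype.card F = q)
    (hodd : Odd q) (m₁ n₁ m₂ n₂ : ℕ)
    (hm₁ : 1 ≤ m₁ ∧ m₁ ≤ q - 1) (hn₁ : 1 ≤ n₁ ∧ n₁ ≤ q - 1)
    (hm₂ : 1 ≤ m₂ ∧ m₂ ≤ q - 1) (hn₂ : 1 ≤ n₂ ∧ n₂ ≤ q - 1)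
    (φ : (F × F) ≃ (F × F))
    (hiso : ∀ u v : F × F, monArc m₁ n₁ u v ↔ monArc m₂ n₂ (φ u) (φ v))
    (f g : F × F → F) (hφ : ∀ p : F × F, φ p = (f p, g p)) :
    (∀ α : F, Nat.card {p : F × F // f p = α} = q) ∧
    (∀ α : F, Nat.card {p : F × F // g p = α} = q) := by
  have hm₁' : m₁ ≠ 0 := by omega
  have hm₂' : m₂ ≠ 0 := by omega
  have hcard : Nat.card F = q := by rw [Nat.card_eq_fintype_card, hq]
  have hf1 : ∀ p : F × F, (φ p).1 = f p := fun p => by rw [hφ p]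
  have hf2 : ∀ p : F × F, (φ p).2 = g p := fun p => by rw [hφ p]
  constructor
  · intro α
    rw [← hcard]
    refine (Nat.card_congr ?_).symm
    refine
      { toFun := fun β =>
          ⟨φ.symm (α, (φ (0, -β)).1 ^ m₂ * α ^ n₂ - (φ (0, -β)).2), ?_⟩
        invFun := fun p => p.1.2
        left_inv := ?_
        right_inv := ?_ }
    · rw [← hf1, φ.apply_symm_apply]
    · intro β
      set w := φ (0, -β) with hw
      set v : F × F := (α, w.1 ^ m₂ * α ^ n₂ - w.2) with hv
      have harc2 : monArc m₂ n₂ w v := by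
        simp only [monArc, hv]
        ring
      have harc1 : monArc m₁ n₁ (0, -β) (φ.symm v) := by
        rw [hiso, ← hw, φ.apply_symm_apply]
        exact harc2
      exact (monArc_zero_fst hm₁' β _).mp harc1
    · rintro ⟨p, hp⟩
      have harc1 : monArc m₁ n₁ (0, -p.2) p := (monArc_zero_fst hm₁' p.2 p).mpr rfl
      have harc2 : monArc m₂ n₂ (φ (0, -p.2)) (φ p) := (hiso _ _).mp harc1
      have hfp : (φ p).1 = α := by rw [hf1]; exact hp
      have hgp : (φ p).2 = (φ (0, -p.2)).1 ^ m₂ * α ^ n₂ - (φ (0, -p.2)).2 := by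
        rw [← hfp]
        have := harc2
        simp only [monArc] at this
        linear_combination this
      have : (α, (φ (0, -p.2)).1 ^ m₂ * α ^ n₂ - (φ (0, -p.2)).2) = φ p := by
        exact Prod.ext hfp.symm hgp.symm
      simp only [Subtype.ext_iff]
      rw [this, φ.symm_apply_apply]
  · intro β
    rw [← hcard]
    refine (Nat.card_congr ?_).symm
    set u := φ.symm (0, -β) with hu
    have hφu : φ u = (0, -β) := φ.apply_symm_apply _
    refine
      { toFun := fun t =>
          ⟨(t, u.1 ^ m₁ * t ^ n₁ - u.2), ?_⟩
        invFun := fun p => p.1.1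
        left_inv := fun t => rfl
        right_inv := ?_ }
    · have harc1 : monArc m₁ n₁ u (t, u.1 ^ m₁ * t ^ n₁ - u.2) := by
        simp only [monArc]; ring
      have harc2 := (hiso _ _).mp harc1
      rw [hφu] at harc2
      have := (monArc_zero_fst hm₂' β _).mp harc2
      rw [← hf2]
      exact this
    · rintro ⟨p, hp⟩
      have harc2 : monArc m₂ n₂ (0, -β) (φ p) := by
        refine (monArc_zero_fst hm₂' β _).mpr ?_
        rw [hf2]; exact hp
      have harc1 : monArc m₁ n₁ u p := by
        rw [hiso, hφu]; exact harc2
      have hp2 : p.2 = u.1 ^ m₁ * p.1 ^ n₁ - u.2 := by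
        simp only [monArc] at harc1
        linear_combination harc1
      simp only [Subtype.ext_iff]
      exact Prod.ext rfl hp2.symm
end

section
/- Let q be an odd prime power, m₁ ≠ n₁ (with 1 ≤ m₁, n₁ ≤ q−1), and let φ : D(q; m₁, n₁) → D(q; m₂, n₂) be a digraph isomorphism written componentwise as φ(x, y) = (f(x, y), g(x, y)). Then f(x, y) = 0 if and only if x = 0. -/
def IsSymmAt {α : Type*} (r : α → α → Prop) (u : α) : Prop :=
  ∀ v, r u v ↔ r v u

theorem IsSymmAt.iff_of_equiv {α β : Type*} {r : α → α → Prop} {s : β → β → Prop} (φ : α ≃ β)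
    (hφ : ∀ u v, r u v ↔ s (φ u) (φ v)) (u : α) : IsSymmAt r u ↔ IsSymmAt s (φ u) := by
  simp only [IsSymmAt, hφ]
  exact (φ.surjective.forall (p := fun w => s (φ u) w ↔ s w (φ u))).symm

theorem exists_pow_mul_pow_ne {F : Type*} [Field F] [Fintype F] {x : F} (hx : x ≠ 0) {m n : ℕ}
    (hnm : n < m) (hlt : m - n < Fintype.card F - 1) : ∃ t : F, x ^ m * t ^ n ≠ t ^ m * x ^ n := by
  obtain ⟨d, rfl⟩ := Nat.exists_eq_add_of_lt hnm
  obtain ⟨a, ha⟩ : ∃ a : Fˣ, a ^ (d + 1) ≠ 1 := by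
    by_contra! h
    have := Nat.le_of_dvd (by omega) ((FiniteField.forall_pow_eq_one_iff F (d + 1)).1 h)
    omega
  refine ⟨a * x, fun h => ha (Units.ext ?_)⟩
  have hax : (a : F) ^ n * x ^ (n + d + 1) * x ^ n ≠ 0 := by simp [hx]
  apply mul_left_cancel₀ hax
  simp only [Units.val_pow_eq_pow_val, Units.val_one]
  linear_combination -h

theorem monArc_isSymmAt_iff {F : Type*} [Field F] (m n : ℕ) (u : F × F) :
    IsSymmAt (monArc m n) u ↔ ∀ t : F, u.1 ^ m * t ^ n = t ^ m * u.1 ^ n := by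
  constructor
  · intro h t
    have hvu := (h (t, u.1 ^ m * t ^ n - u.2)).1 (by simp [monArc])
    simp only [monArc] at hvu
    linear_combination hvu
  · intro h v
    simp only [monArc, h v.1, add_comm u.2]

theorem monArc_isSymmAt_iff_fst_eq_zero {F : Type*} [Field F] [Fintype F] {m n : ℕ}
    (hm : 1 ≤ m ∧ m ≤ Fintype.card F - 1) (hn : 1 ≤ n ∧ n ≤ Fintype.card F - 1) (hne : m ≠ n)
    (u : F × F) : IsSymmAt (monArc m n) u ↔ u.1 = 0 := by
  rw [monArc_isSymmAt_iff]
  refine ⟨fun h => ?_, fun h t => ?_⟩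
  · by_contra hx
    rcases hne.lt_or_gt with hlt | hlt
    · obtain ⟨t, ht⟩ := exists_pow_mul_pow_ne hx hlt (by omega)
      exact ht (by linear_combination -(h t))
    · obtain ⟨t, ht⟩ := exists_pow_mul_pow_ne hx hlt (by omega)
      exact ht (h t)
  · simp [h, zero_pow (by omega : m ≠ 0), zero_pow (by omega : n ≠ 0)]

theorem monArc_isSymmAt_self {F : Type*} [Field F] (m : ℕ) (u : F × F) :
    IsSymmAt (monArc m m) u :=
  (monArc_isSymmAt_iff m m u).2 fun _ => mul_comm _ _

theorem stmt_11_general {F : Type*} [Field F] [Fintype F] (q : ℕ) (hq : Fintype.card F = q)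
    (m₁ n₁ m₂ n₂ : ℕ) (hne : m₁ ≠ n₁)
    (hm₁ : 1 ≤ m₁ ∧ m₁ ≤ q - 1) (hn₁ : 1 ≤ n₁ ∧ n₁ ≤ q - 1)
    (hm₂ : 1 ≤ m₂ ∧ m₂ ≤ q - 1) (hn₂ : 1 ≤ n₂ ∧ n₂ ≤ q - 1)
    (φ : (F × F) ≃ (F × F))
    (hiso : ∀ u v : F × F, monArc m₁ n₁ u v ↔ monArc m₂ n₂ (φ u) (φ v))
    (f g : F × F → F) (hφ : ∀ p : F × F, φ p = (f p, g p)) :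
    ∀ x y : F, f (x, y) = 0 ↔ x = 0 := by
  subst hq
  have hsymm₁ := monArc_isSymmAt_iff_fst_eq_zero hm₁ hn₁ hne
  have hne₂ : m₂ ≠ n₂ := by
    rintro rfl
    have h := (IsSymmAt.iff_of_equiv φ hiso (1, 0)).2 (monArc_isSymmAt_self m₂ _)
    exact one_ne_zero ((hsymm₁ _).1 h)
  intro x y
  have h := (IsSymmAt.iff_of_equiv φ hiso (x, y)).symm.trans (hsymm₁ (x, y))
  rwa [monArc_isSymmAt_iff_fst_eq_zero hm₂ hn₂ hne₂, hφ] at h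

/-- If `q` is odd, `m₁ ≠ n₁`, and `φ = (f, g)` is an isomorphism from
`D(q; m₁,n₁)` to `D(q; m₂,n₂)`, then `f(x,y) = 0` iff `x = 0`. -/
theorem stmt_11 {F : Type*} [Field F] [Fintype F] (q : ℕ) (hq : Fintype.card F = q)
    (hodd : Odd q) (m₁ n₁ m₂ n₂ : ℕ) (hne : m₁ ≠ n₁)
    (hm₁ : 1 ≤ m₁ ∧ m₁ ≤ q - 1) (hn₁ : 1 ≤ n₁ ∧ n₁ ≤ q - 1)
    (hm₂ : 1 ≤ m₂ ∧ m₂ ≤ q - 1) (hn₂ : 1 ≤ n₂ ∧ n₂ ≤ q - 1)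
    (φ : (F × F) ≃ (F × F))
    (hiso : ∀ u v : F × F, monArc m₁ n₁ u v ↔ monArc m₂ n₂ (φ u) (φ v))
    (f g : F × F → F) (hφ : ∀ p : F × F, φ p = (f p, g p)) :
    ∀ x y : F, f (x, y) = 0 ↔ x = 0 :=
  stmt_11_general q hq m₁ n₁ m₂ n₂ hne hm₁ hn₁ hm₂ hn₂ φ hiso f g hφ
end

section
/- Let q be an odd prime power, m₁ ≠ n₁, and let φ : D(q; m₁, n₁) → D(q; m₂, n₂) be a digraph isomorphism with φ(x, y) = (f(x, y), g(x, y)). Then g depends only on the second coordinate y, is an odd function (g(−y) = −g(y), equivalently is induced by a polynomial in Y with only odd-degree terms of degree at most q−2), and g is a permutation of F_q. -/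
lemma nonconst_aux {F : Type*} [Field F] [Fintype F] {m n : ℕ}
    (hmF : m < Fintype.card F) (hnF : n < Fintype.card F)
    (hmn : m ≠ n) (x : F) (hx : x ≠ 0) :
    ∃ t : F, x ^ m * t ^ n ≠ t ^ m * x ^ n := by
  by_contra h
  push_neg at h
  set p : Polynomial F :=
    Polynomial.C (x ^ m) * Polynomial.X ^ n - Polynomial.C (x ^ n) * Polynomial.X ^ m with hp
  have hdeg : p.natDegree < Fintype.card F := by
    have h1 : (Polynomial.C (x ^ m) * Polynomial.X ^ n).natDegree ≤ n :=
      (Polynomial.natDegree_C_mul_le _ _).trans (le_of_eq (Polynomial.natDegree_X_pow n))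
    have h2 : (Polynomial.C (x ^ n) * Polynomial.X ^ m).natDegree ≤ m :=
      (Polynomial.natDegree_C_mul_le _ _).trans (le_of_eq (Polynomial.natDegree_X_pow m))
    have := Polynomial.natDegree_sub_le (Polynomial.C (x ^ m) * Polynomial.X ^ n)
      (Polynomial.C (x ^ n) * Polynomial.X ^ m)
    rw [← hp] at this
    omega
  have hp0 : p = 0 := by
    apply Polynomial.eq_zero_of_natDegree_lt_card_of_eval_eq_zero' p Finset.univ
    · intro t _
      simp only [hp, Polynomial.eval_sub, Polynomial.eval_mul, Polynomial.eval_C,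
        Polynomial.eval_pow, Polynomial.eval_X]
      rw [h t]
      ring
    · simpa using hdeg
  have hc := congrArg (fun r => Polynomial.coeff r n) hp0
  simp only [hp, Polynomial.coeff_sub, Polynomial.coeff_C_mul, Polynomial.coeff_X_pow,
    Polynomial.coeff_zero] at hc
  simp [Ne.symm hmn] at hc
  exact hx hc.1

lemma sym_iff {F : Type*} [Field F] [Fintype F] {m n : ℕ}
    (hm : 1 ≤ m) (hn : 1 ≤ n)
    (hmF : m < Fintype.card F) (hnF : n < Fintype.card F)
    (hmn : m ≠ n) (u : F × F) :
    (∀ v, monArc m n u v ↔ monArc m n v u) ↔ u.1 = 0 := by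
  constructor
  · intro h
    by_contra hx
    obtain ⟨t, ht⟩ := nonconst_aux hmF hnF hmn u.1 hx
    have harc : monArc m n u (t, u.1 ^ m * t ^ n - u.2) := by
      simp [monArc]
    have h2 := (h _).mp harc
    apply ht
    simp only [monArc] at h2
    linear_combination h2
  · intro h v
    simp only [monArc, h, zero_pow (show m ≠ 0 by omega), zero_pow (show n ≠ 0 by omega),
      zero_mul, mul_zero, add_comm]

/-- If `q` is odd, `m₁ ≠ n₁`, and `φ = (f, g)` is an isomorphism from
`D(q; m₁,n₁)` to `D(q; m₂,n₂)`, then `g` depends only on the second coordinate,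
is an odd function, and induces a permutation of `F_q`. -/
theorem stmt_12 {F : Type*} [Field F] [Fintype F] (q : ℕ) (hq : Fintype.card F = q)
    (hodd : Odd q) (m₁ n₁ m₂ n₂ : ℕ) (hne : m₁ ≠ n₁)
    (hm₁ : 1 ≤ m₁ ∧ m₁ ≤ q - 1) (hn₁ : 1 ≤ n₁ ∧ n₁ ≤ q - 1)
    (hm₂ : 1 ≤ m₂ ∧ m₂ ≤ q - 1) (hn₂ : 1 ≤ n₂ ∧ n₂ ≤ q - 1)
    (φ : (F × F) ≃ (F × F))
    (hiso : ∀ u v : F × F, monArc m₁ n₁ u v ↔ monArc m₂ n₂ (φ u) (φ v))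
    (f g : F × F → F) (hφ : ∀ p : F × F, φ p = (f p, g p)) :
    (∀ x x' y : F, g (x, y) = g (x', y)) ∧
    (∀ x y : F, g (x, -y) = - g (x, y)) ∧
    Function.Bijective (fun y : F => g (0, y)) := by
  have hq2 : 2 ≤ q := hq ▸ Fintype.one_lt_card
  have hq3 : 3 ≤ q := by obtain ⟨k, hk⟩ := hodd; omega
  have hm₁c : m₁ < Fintype.card F := by omega
  have hn₁c : n₁ < Fintype.card F := by omega
  have hm₂c : m₂ < Fintype.card F := by omega
  have hn₂c : n₂ < Fintype.card F := by omega
  -- m₂ ≠ n₂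
  have h2ne : m₂ ≠ n₂ := by
    intro he
    have hsym : ∀ v, monArc m₁ n₁ ((1, 0) : F × F) v ↔ monArc m₁ n₁ v (1, 0) := by
      intro v
      rw [hiso, hiso]
      subst he
      simp only [monArc]
      rw [add_comm, mul_comm]
    have := (sym_iff hm₁.1 hn₁.1 hm₁c hn₁c hne (1, 0)).mp hsym
    exact one_ne_zero this
  -- f (0, y) = 0
  have hf0 : ∀ y : F, f (0, y) = 0 := by
    intro y
    have hs1 : ∀ v, monArc m₁ n₁ (0, y) v ↔ monArc m₁ n₁ v (0, y) :=
      (sym_iff hm₁.1 hn₁.1 hm₁c hn₁c hne (0, y)).mpr rfl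
    have hs : ∀ v, monArc m₂ n₂ (φ (0, y)) v ↔ monArc m₂ n₂ v (φ (0, y)) := by
      intro v
      have hv : v = φ (φ.symm v) := (φ.apply_symm_apply v).symm
      rw [hv, ← hiso, ← hiso]
      exact hs1 _
    have := (sym_iff hm₂.1 hn₂.1 hm₂c hn₂c h2ne (φ (0, y))).mp hs
    rw [hφ] at this
    exact this
  -- key : g (x, y) = - g (0, -y)
  have hkey : ∀ x y : F, g (x, y) = - g (0, -y) := by
    intro x y
    have harc : monArc m₁ n₁ (x, y) (0, -y) := by
      simp [monArc, zero_pow (show n₁ ≠ 0 by omega)]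
    have h2 := (hiso _ _).mp harc
    rw [hφ, hφ] at h2
    simp only [monArc] at h2
    rw [hf0, zero_pow (show n₂ ≠ 0 by omega), mul_zero] at h2
    linear_combination h2
  have hodd0 : ∀ y : F, g (0, -y) = - g (0, y) := by
    intro y
    have h1 := hkey 0 (-y)
    rw [neg_neg] at h1
    exact h1
  refine ⟨?_, ?_, ?_⟩
  · intro x x' y
    rw [hkey x y, hkey x' y]
  · intro x y
    rw [hkey x (-y), hkey x y, neg_neg, hodd0]
    ring
  · rw [Finite.injective_iff_bijective.symm]
    intro y y' h
    have : φ (0, y) = φ (0, y') := by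
      rw [hφ, hφ, hf0, hf0]
      simpa using h
    have := φ.injective this
    simpa using this
end

section
/- For q an odd prime power, the number of 2-cycles in D(q; m, n) (unordered pairs of distinct vertices u, v with arcs u → v and v → u) equals (1/2)·q·(q−1)·(2 + gcd(m−n, q−1)). -/
/-!
An ordered pair `(u, v)` with arcs in both directions is determined by `u.1`, `v.1` and `u.2`:
the two arc equations force `v.2` and say that `u.1 ^ m * v.1 ^ n = v.1 ^ m * u.1 ^ n`. Since `2`
is invertible, exactly `q` of these pairs are loops. On the coordinate axes the equation holds
trivially; off them it reads `(u.1 / v.1) ^ (m - n) = 1` in the cyclic group `Fˣ`, which has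
`gcd (m - n, q - 1)` solutions. Halving the number of ordered pairs counts the unordered ones.
-/

theorem Nat.card_subtype_and_add_card_subtype_not_and {α : Type*} [Finite α] (p q : α → Prop) :
    Nat.card {a // q a ∧ p a} + Nat.card {a // ¬q a ∧ p a} = Nat.card {a // p a} := by
  classical
  rw [← Nat.card_congr (Equiv.sumCompl fun a : {a // p a} => q a), Nat.card_sum]
  congr 1 <;> exact (Nat.card_congr <| (Equiv.subtypeSubtypeEquivSubtypeInter _ _).trans <|
    Equiv.subtypeEquivRight fun _ => and_comm).symm

theorem Nat.card_subtype_prod_eq_offDiag_add_diag {α : Type*} [Finite α]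
    (r : α → α → Prop) :
    Nat.card {p : α × α // r p.1 p.2} =
      Nat.card {p : α × α // p.1 ≠ p.2 ∧ r p.1 p.2} + Nat.card {a // r a a} := by
  rw [← Nat.card_subtype_and_add_card_subtype_not_and (fun p : α × α => r p.1 p.2)
    (fun p => p.1 ≠ p.2), add_right_inj]
  refine Nat.card_congr
    { toFun := fun p => ⟨p.1.1, not_not.1 p.2.1 ▸ p.2.2⟩
      invFun := fun a => ⟨(a, a), not_not.2 rfl, a.2⟩
      left_inv := fun ⟨⟨a, b⟩, hab, _⟩ => by cases not_not.1 hab; rfl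
      right_inv := fun _ => rfl }

theorem two_mul_card_sym2_subtype {α : Type*} [Finite α] (r : α → α → Prop)
    (hsymm : ∀ u v, r u v → r v u) (hirrefl : ∀ u, ¬r u u) :
    2 * Nat.card {s : Sym2 α // ∃ u v, s = s(u, v) ∧ r u v} =
      Nat.card {p : α × α // r p.1 p.2} := by
  classical
  have := Fintype.ofFinite α
  let G : SimpleGraph α := { Adj := r, symm := ⟨hsymm⟩, loopless := ⟨hirrefl⟩ }
  have hedge : ∀ s, s ∈ G.edgeSet ↔ ∃ u v, s = s(u, v) ∧ r u v := by
    refine Sym2.ind fun a b => ⟨fun h => ⟨a, b, rfl, h⟩, ?_⟩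
    rintro ⟨u, v, huv, h⟩
    rcases Sym2.eq_iff.1 huv with ⟨rfl, rfl⟩ | ⟨rfl, rfl⟩
    exacts [h, hsymm _ _ h]
  have hdart : G.Dart ≃ {p : α × α // r p.1 p.2} :=
    { toFun := fun d => ⟨d.toProd, d.adj⟩
      invFun := fun p => ⟨p.1, p.2⟩
      left_inv := fun _ => rfl
      right_inv := fun _ => rfl }
  rw [← Nat.card_congr hdart, Nat.card_eq_fintype_card (α := G.Dart),
    G.dart_card_eq_twice_card_edges, SimpleGraph.edgeFinset_card, ← Nat.card_eq_fintype_card,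
    Nat.card_congr (Equiv.subtypeEquivRight hedge)]

theorem pow_mul_pow_eq_pow_mul_pow_iff {G : Type*} [CommGroup G] (m n : ℕ) (a b : G) :
    a ^ m * b ^ n = b ^ m * a ^ n ↔ (a / b) ^ ((m : ℤ) - n) = 1 := by
  rw [zpow_sub, zpow_natCast, zpow_natCast, div_pow, div_pow, mul_inv_eq_one,
    div_eq_div_iff_mul_eq_mul, mul_comm (b ^ m)]

theorem IsCyclic.card_pow_mul_pow_eq_pow_mul_pow (G : Type*) [CommGroup G] [IsCyclic G]
    [Finite G] (m n : ℕ) :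
    Nat.card {p : G × G // p.1 ^ m * p.2 ^ n = p.2 ^ m * p.1 ^ n} =
      Int.gcd ((m : ℤ) - n) (Nat.card G) * Nat.card G := by
  have e : {p : G × G // p.1 ^ m * p.2 ^ n = p.2 ^ m * p.1 ^ n} ≃
      (powMonoidHom ((m : ℤ) - n).natAbs : G →* G).ker × G :=
    { toFun := fun p => (⟨p.1.1 / p.1.2, by
        rw [MonoidHom.mem_ker, powMonoidHom_apply, pow_natAbs_eq_one,
          ← pow_mul_pow_eq_pow_mul_pow_iff]
        exact p.2⟩, p.1.2)
      invFun := fun c => ⟨(c.1 * c.2, c.2), by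
        have hc := c.1.2
        rw [MonoidHom.mem_ker, powMonoidHom_apply, pow_natAbs_eq_one] at hc
        rw [pow_mul_pow_eq_pow_mul_pow_iff, mul_div_cancel_right]
        exact hc⟩
      left_inv := fun p => by ext <;> simp
      right_inv := fun c => by ext <;> simp }
  rw [Nat.card_congr e, Nat.card_prod, IsCyclic.card_powMonoidHom_ker, Nat.gcd_comm,
    Int.gcd_def, Int.natAbs_natCast]

def unitsProdEquiv (F : Type*) [GroupWithZero F] :
    Fˣ × Fˣ ≃ {z : F × F // z.1 ≠ 0 ∧ z.2 ≠ 0} :=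
  (unitsEquivNeZero.prodCongr unitsEquivNeZero).trans Equiv.subtypeProdEquivProd.symm

theorem Field.card_pow_mul_pow_eq_pow_mul_pow {F : Type*} [Field F] [Finite F] {m n : ℕ}
    (hm : m ≠ 0) (hn : n ≠ 0) :
    Nat.card {z : F × F // z.1 ^ m * z.2 ^ n = z.2 ^ m * z.1 ^ n} =
      Nat.card F + (Nat.card F - 1) *
        (1 + Int.gcd ((m : ℤ) - n) ((Nat.card F : ℤ) - 1)) := by
  classical
  set E : F × F → Prop := fun z => z.1 ^ m * z.2 ^ n = z.2 ^ m * z.1 ^ n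
  set P : F × F → Prop := fun z => z.1 ≠ 0 ∧ z.2 ≠ 0
  have hq : 1 ≤ Nat.card F := Nat.card_pos
  have hunits : Nat.card Fˣ = Nat.card F - 1 := Nat.card_units F
  have htorus : Nat.card {z // P z} = (Nat.card F - 1) ^ 2 := by
    rw [← Nat.card_congr (unitsProdEquiv F), Nat.card_prod, hunits, sq]
  have htorusE : Nat.card {z // P z ∧ E z} =
      Int.gcd ((m : ℤ) - n) ((Nat.card F : ℤ) - 1) * (Nat.card F - 1) := by
    have e : {p : Fˣ × Fˣ // p.1 ^ m * p.2 ^ n = p.2 ^ m * p.1 ^ n} ≃ {z // P z ∧ E z} :=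
      ((unitsProdEquiv F).subtypeEquiv fun p => Units.ext_iff.trans (by push_cast; rfl)).trans
        (Equiv.subtypeSubtypeEquivSubtypeInter P E)
    rw [← Nat.card_congr e, IsCyclic.card_pow_mul_pow_eq_pow_mul_pow, hunits, Nat.cast_sub hq,
      Nat.cast_one]
  have haxes : Nat.card {z // ¬P z ∧ E z} + (Nat.card F - 1) ^ 2 = Nat.card F ^ 2 := by
    have hE : ∀ z, ¬P z ∧ E z ↔ ¬P z := fun z => by
      refine ⟨And.left, fun h => ⟨h, ?_⟩⟩
      rcases not_and_or.1 h with h | h <;> simp_all [E, zero_pow hm, zero_pow hn]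
    have hsplit := Nat.card_subtype_and_add_card_subtype_not_and (fun _ : F × F => True) P
    simp only [and_true, Nat.card_subtype_true, Nat.card_prod] at hsplit
    rw [Nat.card_congr (Equiv.subtypeEquivRight hE), ← htorus, sq, ← hsplit, add_comm]
  rw [← Nat.card_subtype_and_add_card_subtype_not_and E P, htorusE]
  obtain ⟨r, hr⟩ : ∃ r, Nat.card F = r + 1 := ⟨_, (Nat.sub_add_cancel hq).symm⟩
  rw [hr, Nat.add_sub_cancel] at haxes ⊢
  push_cast at *
  nlinarith

theorem card_monArc_and_monArc_swap {F : Type*} [Field F] (m n : ℕ) :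
    Nat.card {p : (F × F) × (F × F) // monArc m n p.1 p.2 ∧ monArc m n p.2 p.1} =
      Nat.card {z : F × F // z.1 ^ m * z.2 ^ n = z.2 ^ m * z.1 ^ n} * Nat.card F := by
  refine (Nat.card_congr ?_).trans (Nat.card_prod _ _)
  exact
    { toFun := fun p => (⟨(p.1.1.1, p.1.2.1), by
        obtain ⟨h₁, h₂⟩ := p.2
        simp only [monArc] at h₁ h₂
        rw [← h₁, ← h₂, add_comm]⟩, p.1.1.2)
      invFun := fun c => ⟨((c.1.1.1, c.2), (c.1.1.2, c.1.1.1 ^ m * c.1.1.2 ^ n - c.2)),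
        by simp [monArc], by simp [monArc, c.1.2]⟩
      left_inv := fun ⟨⟨⟨x, a⟩, ⟨y, b⟩⟩, h, _⟩ => by
        simp only [monArc] at h
        ext <;> simp [← h]
      right_inv := fun _ => rfl }

theorem card_monArc_loops {F : Type*} [Field F] (m n : ℕ) (h2 : (2 : F) ≠ 0) :
    Nat.card {u : F × F // monArc m n u u} = Nat.card F :=
  Nat.card_congr
    { toFun := fun u => u.1.1
      invFun := fun x => ⟨(x, x ^ m * x ^ n / 2), by simp [monArc]; field_simp; ring⟩
      left_inv := fun ⟨⟨x, a⟩, h⟩ => by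
        simp only [monArc] at h
        ext
        · rfl
        · simp only
          field_simp
          linear_combination -h
      right_inv := fun _ => rfl }

/-- For `q` odd, the number of 2-cycles (unordered pairs of distinct vertices
with arcs in both directions) of `D(q; m, n)` is
`(1/2) q (q−1) (2 + gcd(m−n, q−1))`. -/
theorem stmt_14 {F : Type*} [Field F] [Fintype F] (q : ℕ) (hq : Fintype.card F = q)
    (hodd : Odd q) (m n : ℕ) (hm : 1 ≤ m ∧ m ≤ q - 1) (hn : 1 ≤ n ∧ n ≤ q - 1) :
    Nat.card {s : Sym2 (F × F) // ∃ u v : F × F,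
        s = s(u, v) ∧ u ≠ v ∧ monArc m n u v ∧ monArc m n v u} =
      q * (q - 1) * (2 + Int.gcd ((m : ℤ) - n) (q - 1)) / 2 := by
  have hcard : Nat.card F = q := Nat.card_eq_fintype_card.trans hq
  have h2 : (2 : F) ≠ 0 := Ring.two_ne_zero fun h => by
    rw [FiniteField.even_card_iff_char_two, hq] at h
    exact Nat.not_even_iff_odd.2 hodd (Nat.even_iff.2 h)
  have hdouble := two_mul_card_sym2_subtype
    (fun u v : F × F => u ≠ v ∧ monArc m n u v ∧ monArc m n v u)
    (fun u v h => ⟨h.1.symm, h.2.2, h.2.1⟩) (fun u h => h.1 rfl)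
  have hsplit := Nat.card_subtype_prod_eq_offDiag_add_diag
    (fun u v : F × F => monArc m n u v ∧ monArc m n v u)
  simp only [and_self] at hsplit
  rw [card_monArc_and_monArc_swap, card_monArc_loops m n h2,
    Field.card_pow_mul_pow_eq_pow_mul_pow (by omega) (by omega), hcard] at hsplit
  obtain ⟨r, rfl⟩ : ∃ r, q = r + 1 := ⟨q - 1, by omega⟩
  simp only [Nat.add_sub_cancel, Nat.cast_add, Nat.cast_one, add_sub_cancel_right] at hsplit ⊢
  rw [← hdouble] at hsplit
  generalize (Nat.card _ : ℕ) = X at hsplit ⊢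
  generalize Int.gcd _ _ = g at hsplit ⊢
  have hX : 2 * X = (r + 1) * r * (2 + g) := by linarith
  omega
end

section
/- The number of solutions (x₁, x₂, y₁, y₂) ∈ F_q⁴ with q odd to the system x₂ + y₂ = x₁^m y₁^n = x₁^n y₁^m and (x₁,x₂) ≠ (y₁,y₂) equals q(q−1)(2 + gcd(m−n, q−1)). -/
/-!
Over a point `(x₁, y₁)` of `C = {(x, y) | x ^ m * y ^ n = x ^ n * y ^ m}` the equation
`x₂ + y₂ = x₁ ^ m * y₁ ^ n` has `q` solutions; `(x₁, x₂) ≠ (y₁, y₂)` removes exactly one of them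
when `x₁ = y₁`, namely `x₂ = y₂ = x₁ ^ (m + n) / 2`, which makes sense as `q` is odd. So the count
is `q · #C - q`. Every pair with a zero coordinate lies in `C` (there are `2q - 1` of them), and
for `x, y ≠ 0` the condition reads `x ^ (m - n) = y ^ (m - n)` in the cyclic group `F_qˣ`, whose
`(m - n)`-th power map has kernel of order `gcd(m - n, q - 1)`. Hence
`#C = (q - 1) (2 + gcd(m - n, q - 1)) + 1`.
-/

theorem card_subtype_and_add_card_subtype_and_not {α : Type*} [Finite α] (p r : α → Prop) :
    Nat.card {x // p x ∧ r x} + Nat.card {x // p x ∧ ¬r x} = Nat.card {x // p x} := by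
  classical
  rw [← Nat.card_sum]
  exact Nat.card_congr <| (Equiv.sumCongr (Equiv.subtypeSubtypeEquivSubtypeInter p r).symm
    (Equiv.subtypeSubtypeEquivSubtypeInter p _).symm).trans (Equiv.sumCompl _)

theorem MonoidHom.card_pairs_apply_eq {G H : Type*} [Group G] [Group H] (f : G →* H) :
    Nat.card {v : G × G // f v.1 = f v.2} = Nat.card G * Nat.card f.ker := by
  rw [← Nat.card_prod]
  exact Nat.card_congr
    { toFun := fun v => (v.1.2, ⟨v.1.1 * v.1.2⁻¹, by simp [v.2]⟩)
      invFun := fun p => ⟨(p.2 * p.1, p.1), by simp [f.mem_ker.mp p.2.2]⟩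
      left_inv := fun v => by ext <;> simp
      right_inv := fun p => by ext <;> simp }

namespace IsCyclic

variable {G : Type*} [CommGroup G] [IsCyclic G] [Finite G]

theorem card_zpowGroupHom_ker (k : ℤ) :
    Nat.card (zpowGroupHom k : G →* G).ker = k.gcd (Nat.card G) := by
  have hker : (zpowGroupHom k : G →* G).ker = (powMonoidHom k.natAbs).ker := by
    ext; simp [pow_natAbs_eq_one]
  rw [hker, card_powMonoidHom_ker, Nat.gcd_comm]
  rfl

theorem card_pairs_pow_mul_pow_eq (m n : ℕ) :
    Nat.card {v : G × G // v.1 ^ m * v.2 ^ n = v.1 ^ n * v.2 ^ m} =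
      Nat.card G * ((m : ℤ) - n).gcd (Nat.card G) := by
  have key (x y : G) : x ^ m * y ^ n = x ^ n * y ^ m ↔
      zpowGroupHom ((m : ℤ) - n) x = zpowGroupHom ((m : ℤ) - n) y := by
    rw [zpowGroupHom_apply, zpowGroupHom_apply, zpow_sub, zpow_sub, zpow_natCast, zpow_natCast,
      zpow_natCast, zpow_natCast, ← div_eq_mul_inv, ← div_eq_mul_inv, div_eq_div_iff_mul_eq_mul,
      mul_comm (y ^ m)]
  rw [Nat.card_congr (Equiv.subtypeEquivRight fun v : G × G => key v.1 v.2),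
    MonoidHom.card_pairs_apply_eq, card_zpowGroupHom_ker]

end IsCyclic

namespace FiniteField

variable {F : Type*} [Field F] [Fintype F]

theorem card_pairs_pow_mul_pow_eq {m n : ℕ} (hm : m ≠ 0) (hn : n ≠ 0) :
    Nat.card {a : F × F // a.1 ^ m * a.2 ^ n = a.1 ^ n * a.2 ^ m} =
      (Fintype.card F - 1) * (2 + ((m : ℤ) - n).gcd (Fintype.card F - 1)) + 1 := by
  set q := Fintype.card F
  set C : F × F → Prop := fun a => a.1 ^ m * a.2 ^ n = a.1 ^ n * a.2 ^ m
  set U : F × F → Prop := fun a => a.1 ≠ 0 ∧ a.2 ≠ 0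
  have hC : ∀ a, ¬U a → C a := by
    rintro ⟨x, y⟩ h
    simp only [U, not_and_or, not_not] at h
    rcases h with rfl | rfl <;> simp [C, zero_pow hm, zero_pow hn]
  let e : Fˣ × Fˣ ≃ {a : F × F // U a} :=
    (unitsEquivNeZero.prodCongr unitsEquivNeZero).trans Equiv.subtypeProdEquivProd.symm
  have hU : Nat.card {a // U a} = (q - 1) ^ 2 := by
    rw [← Nat.card_congr e, Nat.card_prod, Nat.card_units, Nat.card_eq_fintype_card, sq]
  have hCU : Nat.card {a // C a ∧ U a} = (q - 1) * ((m : ℤ) - n).gcd (q - 1) := by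
    have e' : {v : Fˣ × Fˣ // v.1 ^ m * v.2 ^ n = v.1 ^ n * v.2 ^ m} ≃ {a // C a ∧ U a} :=
      (e.subtypeEquiv fun v => by rw [Units.ext_iff]; push_cast; rfl).trans
        ((Equiv.subtypeSubtypeEquivSubtypeInter U C).trans
          (Equiv.subtypeEquivRight fun _ => and_comm))
    rw [← Nat.card_congr e', IsCyclic.card_pairs_pow_mul_pow_eq, Nat.card_units,
      Nat.card_eq_fintype_card, Nat.cast_pred Fintype.card_pos]
  have hCnU : Nat.card {a // C a ∧ ¬U a} = Nat.card {a // ¬U a} :=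
    Nat.card_congr (Equiv.subtypeEquivRight fun a => and_iff_right_of_imp (hC a))
  have htotal : Nat.card {a // U a} + Nat.card {a // ¬U a} = q ^ 2 := by
    classical
    rw [← Nat.card_sum, Nat.card_congr (Equiv.sumCompl U), Nat.card_eq_fintype_card,
      Fintype.card_prod, sq]
  have hsplit := card_subtype_and_add_card_subtype_and_not C U
  obtain ⟨k, hk⟩ : ∃ k, q = k + 1 := Nat.exists_eq_add_one.mpr Fintype.card_pos
  rw [hk, Nat.add_sub_cancel] at hU hCU ⊢
  rw [hk] at htotal
  push_cast at hCU ⊢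
  nlinarith

theorem card_ne_and_add_eq_add_card [NeZero (2 : F)] (C : F × F → Prop) (hC : ∀ x, C (x, x))
    (c : F × F → F) :
    Nat.card {p : (F × F) × (F × F) //
        p.1.2 + p.2.2 = c (p.1.1, p.2.1) ∧ C (p.1.1, p.2.1) ∧ p.1 ≠ p.2} + Fintype.card F =
      Nat.card {a // C a} * Fintype.card F := by
  set S : (F × F) × (F × F) → Prop := fun p => p.1.2 + p.2.2 = c (p.1.1, p.2.1) ∧ C (p.1.1, p.2.1)
  have hS : Nat.card {p // S p} = Nat.card {a // C a} * Fintype.card F := by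
    rw [← Nat.card_eq_fintype_card, ← Nat.card_prod]
    exact Nat.card_congr
      { toFun := fun p => (⟨(p.1.1.1, p.1.2.1), p.2.2⟩, p.1.1.2)
        invFun := fun a => ⟨((a.1.1.1, a.2), (a.1.1.2, c a.1 - a.2)), add_sub_cancel _ _, a.1.2⟩
        left_inv := fun p => by ext <;> simp [← p.2.1]
        right_inv := fun a => rfl }
  have hdiag : Nat.card {p // S p ∧ p.1 = p.2} = Fintype.card F := by
    rw [← Nat.card_eq_fintype_card]
    exact Nat.card_congr
      { toFun := fun p => p.1.1.1
        invFun := fun x => ⟨((x, c (x, x) / 2), (x, c (x, x) / 2)), ⟨add_halves _, hC x⟩, rfl⟩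
        left_inv := fun ⟨⟨⟨x, y⟩, ⟨x', y'⟩⟩, ⟨hsum, _⟩, heq⟩ => by
          dsimp only at hsum heq
          obtain ⟨rfl, rfl⟩ := Prod.ext_iff.mp heq
          have hy : y = c (x, x) / 2 := by
            rw [eq_div_iff two_ne_zero, mul_two]
            exact hsum
          ext <;> simp [hy]
        right_inv := fun x => rfl }
  have hoff : Nat.card {p : (F × F) × (F × F) //
      p.1.2 + p.2.2 = c (p.1.1, p.2.1) ∧ C (p.1.1, p.2.1) ∧ p.1 ≠ p.2} =
        Nat.card {p // S p ∧ p.1 ≠ p.2} :=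
    Nat.card_congr (Equiv.subtypeEquivRight fun _ => and_assoc.symm)
  rw [hoff, ← hS, ← hdiag, add_comm]
  exact card_subtype_and_add_card_subtype_and_not S _

end FiniteField

/-- For `q` odd, the number of solutions `(x₁,x₂,y₁,y₂) ∈ F_q⁴` of
`x₂ + y₂ = x₁^m y₁^n = x₁^n y₁^m` with `(x₁,x₂) ≠ (y₁,y₂)` is
`q (q−1) (2 + gcd(m−n, q−1))`. -/
theorem stmt_15 {F : Type*} [Field F] [Fintype F] (q : ℕ) (hq : Fintype.card F = q)
    (hodd : Odd q) (m n : ℕ) (hm : 1 ≤ m ∧ m ≤ q - 1) (hn : 1 ≤ n ∧ n ≤ q - 1) :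
    Nat.card {p : (F × F) × (F × F) //
        p.1.2 + p.2.2 = p.1.1 ^ m * p.2.1 ^ n ∧
        p.1.1 ^ m * p.2.1 ^ n = p.1.1 ^ n * p.2.1 ^ m ∧
        p.1 ≠ p.2} =
      q * (q - 1) * (2 + Int.gcd ((m : ℤ) - n) (q - 1)) := by
  subst hq
  have : NeZero (2 : F) := ⟨Ring.two_ne_zero fun hchar =>
    Nat.not_even_iff_odd.mpr hodd (Nat.even_iff.mpr (FiniteField.even_card_of_char_two hchar))⟩
  have hcount := FiniteField.card_ne_and_add_eq_add_card
    (fun a : F × F => a.1 ^ m * a.2 ^ n = a.1 ^ n * a.2 ^ m) (fun x => by ring)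
    (fun a => a.1 ^ m * a.2 ^ n)
  rw [FiniteField.card_pairs_pow_mul_pow_eq (by omega) (by omega), add_one_mul] at hcount
  rw [Nat.add_right_cancel hcount]
  ring
end

section
/- Let q be an odd prime power. If D(q; m₁, n₁) ≅ D(q; m₂, n₂), then gcd(m₁ − n₁, q−1) = gcd(m₂ − n₂, q−1). -/
open Finset

theorem IsCyclic.card_filter_pow_eq_pow {G : Type*} [CommGroup G] [Fintype G] [IsCyclic G]
    [DecidableEq G] (m n : ℕ) :
    #{z : G | z ^ m = z ^ n} = Int.gcd ((m : ℤ) - n) (Fintype.card G) := by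
  set g := Int.gcd ((m : ℤ) - n) (Fintype.card G)
  have hiff (z : G) : z ^ m = z ^ n ↔ z ^ g = 1 := by
    rw [← zpow_natCast, ← zpow_natCast z n, ← mul_inv_eq_one, ← zpow_neg, ← zpow_add,
      ← sub_eq_add_neg, ← orderOf_dvd_iff_zpow_eq_one, ← orderOf_dvd_iff_pow_eq_one]
    refine ⟨fun h => Int.dvd_gcd h (Int.natCast_dvd_natCast.2 orderOf_dvd_card), fun h => ?_⟩
    exact (Int.natCast_dvd_natCast.2 h).trans (Int.gcd_dvd_left _ _)
  have hg : g ∣ Fintype.card G := by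
    simpa using Int.gcd_dvd_natAbs_right ((m : ℤ) - n) (Fintype.card G)
  calc #{z : G | z ^ m = z ^ n} = #{z : G | z ^ g = 1} := by simp only [hiff]
    _ = Nat.card (powMonoidHom g : G →* G).ker := by
      rw [← Fintype.card_subtype, ← Nat.card_eq_fintype_card]
      exact Nat.card_congr <| Equiv.subtypeEquivRight fun z => by
        rw [MonoidHom.mem_ker, powMonoidHom_apply]
    _ = g := by
      rw [IsCyclic.card_powMonoidHom_ker, Nat.card_eq_fintype_card, Nat.gcd_eq_right hg]

theorem card_filter_pow_mul_pow_eq {G : Type*} [CommGroup G] [Fintype G] [DecidableEq G]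
    (m n : ℕ) :
    #{p : G × G | p.1 ^ m * p.2 ^ n = p.2 ^ m * p.1 ^ n}
      = #{z : G | z ^ m = z ^ n} * Fintype.card G := by
  rw [← card_univ, ← card_product]
  refine card_nbij' (fun p => (p.1 / p.2, p.2)) (fun p => (p.1 * p.2, p.2)) ?_ ?_ ?_ ?_
  · intro p hp
    simp only [mem_coe, mem_filter, mem_product, mem_univ, true_and, and_true] at hp ⊢
    rw [div_pow, div_pow, div_eq_div_iff_mul_eq_mul, hp, mul_comm]
  · intro p hp
    simp only [mem_coe, mem_filter, mem_product, mem_univ, true_and, and_true] at hp ⊢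
    rw [mul_pow, mul_pow, hp, mul_right_comm, mul_comm]
  · intro p _; simp
  · intro p _; simp

theorem card_filter_pow_mul_pow_eq_add_units {M₀ : Type*} [GroupWithZero M₀] [Fintype M₀]
    [DecidableEq M₀] {m n : ℕ} (hm : m ≠ 0) (hn : n ≠ 0) :
    #{p : M₀ × M₀ | p.1 ^ m * p.2 ^ n = p.2 ^ m * p.1 ^ n}
      = #{p : M₀ × M₀ | p.1 = 0 ∨ p.2 = 0}
        + #{p : M₀ˣ × M₀ˣ | p.1 ^ m * p.2 ^ n = p.2 ^ m * p.1 ^ n} := by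
  rw [← card_filter_add_card_filter_not (fun p : M₀ × M₀ => p.1 = 0 ∨ p.2 = 0), filter_filter,
    filter_filter]
  congr 1
  · congr 1
    ext p
    simp only [mem_filter, mem_univ, true_and, and_iff_right_iff_imp]
    rintro (h | h) <;> simp [h, hm, hn]
  · symm
    refine card_bij (fun p _ => ((p.1 : M₀), (p.2 : M₀))) ?_ ?_ ?_
    · intro p hp
      simp only [mem_filter, mem_univ, true_and] at hp ⊢
      refine ⟨by simpa using congrArg Units.val hp, by simp⟩
    · intro p _ p' _ h
      simp only [Prod.mk.injEq] at h
      exact Prod.ext (Units.ext h.1) (Units.ext h.2)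
    · rintro ⟨x, y⟩ hp
      simp only [mem_filter, mem_univ, true_and, not_or] at hp
      obtain ⟨hp, hx, hy⟩ := hp
      refine ⟨(Units.mk0 x hx, Units.mk0 y hy), ?_, rfl⟩
      simp only [mem_filter, mem_univ, true_and]
      ext
      simpa using hp

theorem card_filter_pow_mul_pow_eq_of_field {F : Type*} [Field F] [Fintype F] [DecidableEq F]
    {m n : ℕ} (hm : m ≠ 0) (hn : n ≠ 0) :
    #{p : F × F | p.1 ^ m * p.2 ^ n = p.2 ^ m * p.1 ^ n}
      = #{p : F × F | p.1 = 0 ∨ p.2 = 0}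
        + Int.gcd ((m : ℤ) - n) ((Fintype.card F : ℤ) - 1) * (Fintype.card F - 1) := by
  have hcard : ((Fintype.card F - 1 : ℕ) : ℤ) = (Fintype.card F : ℤ) - 1 := by
    have := Fintype.card_pos (α := F)
    omega
  rw [card_filter_pow_mul_pow_eq_add_units hm hn, card_filter_pow_mul_pow_eq,
    IsCyclic.card_filter_pow_eq_pow, Fintype.card_units, hcard]

theorem RelIso.card_filter_rel_and_rel_swap {α β : Type*} [Fintype α] [Fintype β]
    {r : α → α → Prop} {s : β → β → Prop} [DecidableRel r] [DecidableRel s] (φ : r ≃r s) :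
    #{p : α × α | r p.1 p.2 ∧ r p.2 p.1} = #{p : β × β | s p.1 p.2 ∧ s p.2 p.1} :=
  card_equiv (φ.toEquiv.prodCongr φ.toEquiv) fun p => by simp [φ.map_rel_iff]

instance monArc.instDecidableRel {F : Type*} [Field F] [DecidableEq F] (m n : ℕ) :
    DecidableRel (monArc (F := F) m n) :=
  fun u v => inferInstanceAs (Decidable (u.2 + v.2 = u.1 ^ m * v.1 ^ n))

theorem card_filter_monArc_and_monArc_swap {F : Type*} [Field F] [Fintype F] [DecidableEq F]
    (m n : ℕ) :
    #{p : (F × F) × (F × F) | monArc m n p.1 p.2 ∧ monArc m n p.2 p.1}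
      = #{p : F × F | p.1 ^ m * p.2 ^ n = p.2 ^ m * p.1 ^ n} * Fintype.card F := by
  rw [← card_univ (α := F), ← card_product]
  refine card_nbij' (fun p => ((p.1.1, p.2.1), p.1.2))
    (fun t => ((t.1.1, t.2), (t.1.2, t.1.1 ^ m * t.1.2 ^ n - t.2))) ?_ ?_ ?_ ?_
  · rintro ⟨⟨x₁, x₂⟩, ⟨y₁, y₂⟩⟩ hp
    simp only [mem_coe, mem_filter, mem_product, mem_univ, true_and, and_true] at hp ⊢
    unfold monArc at *
    linear_combination hp.2 - hp.1
  · rintro ⟨⟨x₁, y₁⟩, x₂⟩ hp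
    simp only [mem_coe, mem_filter, mem_product, mem_univ, true_and, and_true] at hp ⊢
    unfold monArc at *
    exact ⟨by ring, by linear_combination hp⟩
  · rintro ⟨⟨x₁, x₂⟩, ⟨y₁, y₂⟩⟩ hp
    simp only [mem_coe, mem_filter, mem_univ, true_and] at hp
    unfold monArc at hp
    simp only [Prod.mk.injEq, true_and]
    linear_combination -hp.1
  · intro t _
    rfl

theorem stmt_16_general {F : Type*} [Field F] [Fintype F] (q : ℕ) (hq : Fintype.card F = q)
    (m₁ n₁ m₂ n₂ : ℕ)
    (hm₁ : 1 ≤ m₁ ∧ m₁ ≤ q - 1) (hn₁ : 1 ≤ n₁ ∧ n₁ ≤ q - 1)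
    (hm₂ : 1 ≤ m₂ ∧ m₂ ≤ q - 1) (hn₂ : 1 ≤ n₂ ∧ n₂ ≤ q - 1)
    (φ : (F × F) ≃ (F × F))
    (hiso : ∀ u v : F × F, monArc m₁ n₁ u v ↔ monArc m₂ n₂ (φ u) (φ v)) :
    Int.gcd ((m₁ : ℤ) - n₁) (q - 1) = Int.gcd ((m₂ : ℤ) - n₂) (q - 1) := by
  have : DecidableEq F := Classical.decEq F
  have hq1 : 1 < q := hq ▸ Fintype.one_lt_card
  have h2cycles := RelIso.card_filter_rel_and_rel_swap ⟨φ, (hiso _ _).symm⟩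
  rw [card_filter_monArc_and_monArc_swap, card_filter_monArc_and_monArc_swap,
    card_filter_pow_mul_pow_eq_of_field (by omega : m₁ ≠ 0) (by omega : n₁ ≠ 0),
    card_filter_pow_mul_pow_eq_of_field (by omega : m₂ ≠ 0) (by omega : n₂ ≠ 0), hq] at h2cycles
  have hgcd_mul := Nat.add_left_cancel (Nat.eq_of_mul_eq_mul_right (by omega) h2cycles)
  exact Nat.eq_of_mul_eq_mul_right (by omega) hgcd_mul

/-- For `q` odd, if `D(q; m₁,n₁) ≅ D(q; m₂,n₂)` then
`gcd(m₁−n₁, q−1) = gcd(m₂−n₂, q−1)`. -/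
theorem stmt_16 {F : Type*} [Field F] [Fintype F] (q : ℕ) (hq : Fintype.card F = q)
    (hodd : Odd q) (m₁ n₁ m₂ n₂ : ℕ)
    (hm₁ : 1 ≤ m₁ ∧ m₁ ≤ q - 1) (hn₁ : 1 ≤ n₁ ∧ n₁ ≤ q - 1)
    (hm₂ : 1 ≤ m₂ ∧ m₂ ≤ q - 1) (hn₂ : 1 ≤ n₂ ∧ n₂ ≤ q - 1)
    (φ : (F × F) ≃ (F × F))
    (hiso : ∀ u v : F × F, monArc m₁ n₁ u v ↔ monArc m₂ n₂ (φ u) (φ v)) :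
    Int.gcd ((m₁ : ℤ) - n₁) (q - 1) = Int.gcd ((m₂ : ℤ) - n₂) (q - 1) :=
  stmt_16_general q hq m₁ n₁ m₂ n₂ hm₁ hn₁ hm₂ hn₂ φ hiso
end

section
/- For every odd prime power q, the digraphs D(q; (q−1)/2, q−1) and D(q; q−1, (q−1)/2) are not isomorphic. -/
/-- For every odd prime power `q`, the digraphs `D(q; (q−1)/2, q−1)` and
`D(q; q−1, (q−1)/2)` are not isomorphic. -/
theorem stmt_17 {F : Type*} [Field F] [Fintype F] (q : ℕ) (hq : Fintype.card F = q)
    (hodd : Odd q) :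
    ¬ ∃ φ : (F × F) ≃ (F × F),
      ∀ u v : F × F,
        monArc ((q - 1) / 2) (q - 1) u v ↔
          monArc (q - 1) ((q - 1) / 2) (φ u) (φ v) := by
  rintro ⟨φ, hφ⟩
  classical
  set m : ℕ := (q - 1) / 2 with hm
  have hq2 : 2 ≤ q := hq ▸ Fintype.one_lt_card
  have hq3 : 3 ≤ q := by
    rcases hodd with ⟨k, hk⟩; omega
  have hm1 : 1 ≤ m := by omega
  have hpow : ∀ x : F, x ≠ 0 → x ^ (q - 1) = 1 := by
    intro x hx
    rw [← hq]
    exact FiniteField.pow_card_sub_one_eq_one x hx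
  set u₀ : F × F := φ.symm (1, 0) with hu₀
  have key : ∀ x : F, x ≠ 0 →
      (φ.symm (x, 0)).2 = u₀.2 ∧ (φ.symm (x, 0)).1 ^ m = u₀.1 ^ m := by
    intro x hx
    set u : F × F := φ.symm (x, 0) with hu
    have hequiv : ∀ v : F × F,
        monArc m (q - 1) u v ↔ monArc m (q - 1) u₀ v := by
      intro v
      rw [hφ u v, hφ u₀ v, hu, hu₀]
      unfold monArc
      rw [Equiv.apply_symm_apply, Equiv.apply_symm_apply]
      simp only
      rw [hpow x hx, hpow 1 one_ne_zero]
    have h2 : u.2 = u₀.2 := by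
      have h := hequiv (0, -u.2)
      unfold monArc at h
      simp only at h
      rw [zero_pow (by omega : q - 1 ≠ 0), mul_zero, mul_zero] at h
      have h' := h.mp (by ring)
      have := add_neg_eq_zero.mp h'
      exact this.symm
    refine ⟨h2, ?_⟩
    have h := hequiv (1, u.1 ^ m - u.2)
    unfold monArc at h
    simp only at h
    rw [one_pow, mul_one, mul_one] at h
    have h' := h.mp (by ring)
    rw [h2] at h'
    linear_combination h'
  set ε : F := u₀.1 ^ m with hε
  set p : Polynomial F := Polynomial.X ^ m - Polynomial.C ε with hp
  have hpne : p ≠ 0 := Polynomial.X_pow_sub_C_ne_zero (by omega) ε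
  have hmaps : ∀ x : Fˣ, x ∈ (Finset.univ : Finset Fˣ) →
      (φ.symm ((x : F), 0)).1 ∈ p.roots.toFinset := by
    intro x _
    rw [Multiset.mem_toFinset, Polynomial.mem_roots hpne]
    have := (key (x : F) x.ne_zero).2
    simp [hp, Polynomial.IsRoot, this, hε]
  have hinj : Set.InjOn (fun x : Fˣ => (φ.symm ((x : F), 0)).1)
      ((Finset.univ : Finset Fˣ) : Set Fˣ) := by
    intro x _ y _ hxy
    have hx2 := (key (x : F) x.ne_zero).1
    have hy2 := (key (y : F) y.ne_zero).1
    have heq : φ.symm ((x : F), 0) = φ.symm ((y : F), 0) :=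
      Prod.ext hxy (hx2.trans hy2.symm)
    have := φ.symm.injective heq
    exact Units.ext (congrArg Prod.fst this)
  have hcard1 : (Finset.univ : Finset Fˣ).card ≤ p.roots.toFinset.card :=
    Finset.card_le_card_of_injOn _ hmaps hinj
  have hcard2 : p.roots.toFinset.card ≤ m := by
    calc p.roots.toFinset.card ≤ Multiset.card p.roots := p.roots.toFinset_card_le
      _ ≤ p.natDegree := Polynomial.card_roots' p
      _ = m := by rw [hp, Polynomial.natDegree_X_pow_sub_C]
  have hcardu : (Finset.univ : Finset Fˣ).card = q - 1 := by
    rw [Finset.card_univ, Fintype.card_units, hq]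
  omega
end
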